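/- arXiv:1809.06734 — 7 statements merged into one kernel-verified Lean document; each statement's English description precedes it below -/
import Mathlib

section
/- For all x > y > 1: v₁(x) = 2^{αρ̂−1}·c_{αρ}·U(x,y)/g(y) − sin(παρ̂)·(1−αρ̂)·((x−y)^{α−1}/g(y))·∫₁^{z(x,y)} (u−1)^{αρ}(u+1)^{αρ̂−2} du + (α−1)₊·sin(παρ̂)·(∫₁^x ψ_{αρ}(u) du)·((αρ/g(y))·∫₁^y ψ_{αρ̂}(u) du − 1). -/
open Real MeasureTheory Set Filter intervalIntegral
open scoped Topology

/-- `ψ_{αρ}(u) = (u−1)^{αρ̂−1}(u+1)^{αρ−1}` where `ρ̂ = 1 − ρ`. -/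
noncomputable def psiRho (α ρ : ℝ) (u : ℝ) : ℝ :=
  (u - 1) ^ (α * (1 - ρ) - 1) * (u + 1) ^ (α * ρ - 1)

/-- `ψ_{αρ̂}(u) = (u−1)^{αρ−1}(u+1)^{αρ̂−1}` where `ρ̂ = 1 − ρ`. -/
noncomputable def psiRhoHat (α ρ : ℝ) (u : ℝ) : ℝ :=
  (u - 1) ^ (α * ρ - 1) * (u + 1) ^ (α * (1 - ρ) - 1)

/-- `g(y) = (y−1)^{αρ}(y+1)^{αρ̂−1}`. -/
noncomputable def gfun (α ρ : ℝ) (y : ℝ) : ℝ :=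
  (y - 1) ^ (α * ρ) * (y + 1) ^ (α * (1 - ρ) - 1)

/-- `z(x,y) = |xy−1|/|x−y|`. -/
noncomputable def zfun (x y : ℝ) : ℝ := |x * y - 1| / |x - y|

/-- `c_{αρ} = 2^{αρ}·π·αρ·Γ(αρ)/Γ(1−αρ̂)`. -/
noncomputable def cRho (α ρ : ℝ) : ℝ :=
  2 ^ (α * ρ) * π * (α * ρ) * Real.Gamma (α * ρ) / Real.Gamma (1 - α * (1 - ρ))

/-- The harmonic function `v₁` (defined piecewise for `x > 1` and `x < −1`). -/
noncomputable def v1fun (α ρ : ℝ) (x : ℝ) : ℝ :=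
  if 1 < x then
    Real.sin (π * (α * (1 - ρ))) *
      ((x + 1) * psiRho α ρ x - max (α - 1) 0 * ∫ u in (1:ℝ)..x, psiRho α ρ u)
  else
    Real.sin (π * (α * ρ)) *
      ((|x| - 1) * psiRhoHat α ρ |x| - max (α - 1) 0 * ∫ u in (1:ℝ)..|x|, psiRhoHat α ρ u)

/-- The explicit Profeta–Simon Green function `U(x,y)` (for `x > y > 1` resp. `x < −1 < 1 < y`). -/
noncomputable def Ufun (α ρ : ℝ) (x y : ℝ) : ℝ :=
  if 1 < x then
    (2 ^ (1 - α) / (Real.Gamma (α * ρ) * Real.Gamma (α * (1 - ρ)))) *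
      ((x - y) ^ (α - 1) * (∫ u in (1:ℝ)..zfun x y, psiRhoHat α ρ u)
        - max (α - 1) 0 * (∫ u in (1:ℝ)..y, psiRhoHat α ρ u) * ∫ u in (1:ℝ)..x, psiRho α ρ u)
  else
    (Real.sin (π * (α * ρ)) / Real.sin (π * (α * (1 - ρ)))) *
    (2 ^ (1 - α) / (Real.Gamma (α * ρ) * Real.Gamma (α * (1 - ρ)))) *
      ((y - x) ^ (α - 1) * (∫ u in (1:ℝ)..zfun x y, psiRhoHat α ρ u)
        - max (α - 1) 0 * (∫ u in (1:ℝ)..y, psiRhoHat α ρ u) * ∫ u in (1:ℝ)..|x|, psiRhoHat α ρ u)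

/-!
Since `g' = αρ ψ_{αρ̂} - (1-αρ̂) (u-1)^{αρ}(u+1)^{αρ̂-2}` and `g(1) = 0`, the integral term of the
right-hand side combines with the `ψ_{αρ̂}`-integral of `U` into `g(z)`. For `x > y > 1` one has
`z - 1 = (x+1)(y-1)/(x-y)` and `z + 1 = (x-1)(y+1)/(x-y)`, hence
`(x-y)^{α-1} g(z) = (x+1) ψ_{αρ}(x) g(y)`. By the reflection formula for `Γ`, the constant in
front of `U` is `2^{αρ̂-1} c_{αρ} 2^{1-α} / (Γ(αρ)Γ(αρ̂)) = αρ sin(παρ̂)`, and what remains is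
linear algebra.
-/

lemma intervalIntegrable_sub_one_rpow_mul_add_one_rpow {p : ℝ} (q : ℝ) (hp : -1 < p) {z : ℝ}
    (hz : 1 ≤ z) : IntervalIntegrable (fun u => (u - 1) ^ p * (u + 1) ^ q) volume 1 z := by
  have hsub : IntervalIntegrable (fun u : ℝ => (u - 1) ^ p) volume 1 z := by
    simpa using (intervalIntegrable_rpow' (a := 0) (b := z - 1) hp).comp_sub_right 1
  refine hsub.mul_continuousOn (ContinuousOn.rpow_const (by fun_prop) fun u hu => ?_)
  rw [uIcc_of_le hz] at hu
  exact Or.inl (by linarith [hu.1])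

lemma integral_sub_one_rpow_mul_add_one_rpow_sub {a : ℝ} (b : ℝ) (ha : 0 < a) {z : ℝ}
    (hz : 1 ≤ z) :
    a * (∫ u in (1:ℝ)..z, (u - 1) ^ (a - 1) * (u + 1) ^ (b - 1))
      - (1 - b) * ∫ u in (1:ℝ)..z, (u - 1) ^ a * (u + 1) ^ (b - 2)
      = (z - 1) ^ a * (z + 1) ^ (b - 1) := by
  have hint₁ := (intervalIntegrable_sub_one_rpow_mul_add_one_rpow (b - 1)
    (by linarith : -1 < a - 1) hz).const_mul a
  have hint₂ := (intervalIntegrable_sub_one_rpow_mul_add_one_rpow (b - 2)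
    (by linarith : -1 < a) hz).const_mul (1 - b)
  have hcont : ContinuousOn (fun u : ℝ => (u - 1) ^ a * (u + 1) ^ (b - 1)) (Icc 1 z) :=
    (ContinuousOn.rpow_const (by fun_prop) fun _ _ => Or.inr ha.le).mul
      (ContinuousOn.rpow_const (by fun_prop) fun u hu => Or.inl (by linarith [hu.1]))
  have hderiv : ∀ u ∈ Ioo 1 z, HasDerivAt (fun u : ℝ => (u - 1) ^ a * (u + 1) ^ (b - 1))
      (a * ((u - 1) ^ (a - 1) * (u + 1) ^ (b - 1))
        - (1 - b) * ((u - 1) ^ a * (u + 1) ^ (b - 2))) u := by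
    intro u hu
    have h₁ := ((hasDerivAt_id' u).sub_const 1).rpow_const (p := a) (Or.inl (by linarith [hu.1]))
    have h₂ := ((hasDerivAt_id' u).add_const 1).rpow_const (p := b - 1)
      (Or.inl (by linarith [hu.1]))
    refine (h₁.mul h₂).congr_deriv ?_
    rw [show b - 1 - 1 = b - 2 by ring]
    ring
  rw [← intervalIntegral.integral_const_mul, ← intervalIntegral.integral_const_mul,
    ← integral_sub hint₁ hint₂,
    integral_eq_sub_of_hasDerivAt_of_le hz hcont hderiv (hint₁.sub hint₂), sub_self,
    zero_rpow ha.ne', zero_mul, sub_zero]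

lemma zfun_sub_one {x y : ℝ} (hy : 1 < y) (hyx : y < x) :
    zfun x y - 1 = (x + 1) * (y - 1) / (x - y) := by
  rw [zfun, abs_of_pos (by nlinarith), abs_of_pos (by linarith)]
  field_simp [(by linarith : x - y ≠ 0)]
  ring

lemma zfun_add_one {x y : ℝ} (hy : 1 < y) (hyx : y < x) :
    zfun x y + 1 = (x - 1) * (y + 1) / (x - y) := by
  rw [zfun, abs_of_pos (by nlinarith), abs_of_pos (by linarith)]
  field_simp [(by linarith : x - y ≠ 0)]
  ring

lemma one_lt_zfun {x y : ℝ} (hy : 1 < y) (hyx : y < x) : 1 < zfun x y := by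
  have h : 0 < (x + 1) * (y - 1) / (x - y) := div_pos (by nlinarith) (by linarith)
  linarith [zfun_sub_one hy hyx]

lemma gfun_pos (α ρ : ℝ) {y : ℝ} (hy : 1 < y) : 0 < gfun α ρ y :=
  mul_pos (rpow_pos_of_pos (by linarith) _) (rpow_pos_of_pos (by linarith) _)

lemma add_one_mul_psiRho (α ρ : ℝ) {x : ℝ} (hx : -1 < x) :
    (x + 1) * psiRho α ρ x = (x + 1) ^ (α * ρ) * (x - 1) ^ (α * (1 - ρ) - 1) := by
  rw [psiRho, rpow_sub_one (by linarith : x + 1 ≠ 0)]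
  field_simp [(by linarith : x + 1 ≠ 0)]

lemma rpow_mul_gfun_zfun (α ρ : ℝ) {x y : ℝ} (hy : 1 < y) (hyx : y < x) :
    (x - y) ^ (α - 1) * gfun α ρ (zfun x y) = (x + 1) * psiRho α ρ x * gfun α ρ y := by
  have hxy : 0 < x - y := by linarith
  have hsplit : (x - y) ^ (α - 1) = (x - y) ^ (α * ρ) * (x - y) ^ (α * (1 - ρ) - 1) := by
    rw [← rpow_add hxy]
    ring_nf
  have hne₁ := (rpow_pos_of_pos hxy (α * ρ)).ne'
  have hne₂ := (rpow_pos_of_pos hxy (α * (1 - ρ) - 1)).ne'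
  rw [add_one_mul_psiRho α ρ (by linarith), gfun, gfun, zfun_sub_one hy hyx, zfun_add_one hy hyx,
    div_rpow (by nlinarith) hxy.le, div_rpow (by nlinarith) hxy.le,
    mul_rpow (by linarith) (by linarith), mul_rpow (by linarith) (by linarith), hsplit]
  field_simp

lemma two_rpow_mul_cRho_mul_div_Gamma_mul_Gamma {α ρ : ℝ} (ha : 0 < α * ρ)
    (hb : 0 < α * (1 - ρ)) (hb₁ : α * (1 - ρ) < 1) :
    2 ^ (α * (1 - ρ) - 1) * cRho α ρ
      * (2 ^ (1 - α) / (Gamma (α * ρ) * Gamma (α * (1 - ρ))))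
      = α * ρ * sin (π * (α * (1 - ρ))) := by
  have hsin : 0 < sin (π * (α * (1 - ρ))) :=
    sin_pos_of_pos_of_lt_pi (by positivity) (by nlinarith [pi_pos])
  have hreflection :
      Gamma (α * (1 - ρ)) * Gamma (1 - α * (1 - ρ)) * sin (π * (α * (1 - ρ))) = π := by
    rw [Gamma_mul_Gamma_one_sub, div_mul_cancel₀ _ hsin.ne']
  have hpow : (2:ℝ) ^ (α * (1 - ρ) - 1) * 2 ^ (α * ρ) * 2 ^ (1 - α) = 1 := by
    rw [← rpow_add two_pos, ← rpow_add two_pos,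
      show α * (1 - ρ) - 1 + α * ρ + (1 - α) = 0 by ring, rpow_zero]
  have := Gamma_pos_of_pos ha
  have := Gamma_pos_of_pos hb
  have := Gamma_pos_of_pos (by linarith : 0 < 1 - α * (1 - ρ))
  generalize sin (π * (α * (1 - ρ))) = s at hreflection ⊢
  rw [cRho]
  field_simp
  linear_combination α * ρ * π * hpow - α * ρ * hreflection

theorem stmt_1_general (α ρ : ℝ) (hα0 : 0 < α) (hρ0 : 0 < ρ) (hρ1 : ρ < 1)
    (hαρh : α * (1 - ρ) < 1)
    (x y : ℝ) (hy : 1 < y) (hyx : y < x) :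
    v1fun α ρ x
      = 2 ^ (α * (1 - ρ) - 1) * cRho α ρ * Ufun α ρ x y / gfun α ρ y
        - Real.sin (π * (α * (1 - ρ))) * (1 - α * (1 - ρ)) * ((x - y) ^ (α - 1) / gfun α ρ y)
            * (∫ u in (1:ℝ)..zfun x y, (u - 1) ^ (α * ρ) * (u + 1) ^ (α * (1 - ρ) - 2))
        + max (α - 1) 0 * Real.sin (π * (α * (1 - ρ))) * (∫ u in (1:ℝ)..x, psiRho α ρ u)
            * ((α * ρ / gfun α ρ y) * (∫ u in (1:ℝ)..y, psiRhoHat α ρ u) - 1) := by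
  have hx : 1 < x := hy.trans hyx
  have ha : 0 < α * ρ := mul_pos hα0 hρ0
  have hb : 0 < α * (1 - ρ) := mul_pos hα0 (by linarith)
  have hconst := two_rpow_mul_cRho_mul_div_Gamma_mul_Gamma ha hb hαρh
  have hftc : α * ρ * (∫ u in (1:ℝ)..zfun x y, psiRhoHat α ρ u)
      - (1 - α * (1 - ρ))
        * (∫ u in (1:ℝ)..zfun x y, (u - 1) ^ (α * ρ) * (u + 1) ^ (α * (1 - ρ) - 2))
      = gfun α ρ (zfun x y) :=
    integral_sub_one_rpow_mul_add_one_rpow_sub _ ha (one_lt_zfun hy hyx).le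
  have hg : gfun α ρ y * (gfun α ρ y)⁻¹ = 1 := mul_inv_cancel₀ (gfun_pos α ρ hy).ne'
  rw [v1fun, if_pos hx, Ufun, if_pos hx]
  linear_combination
    - sin (π * (α * (1 - ρ))) * (x + 1) * psiRho α ρ x * hg
    - (sin (π * (α * (1 - ρ))) * (gfun α ρ y)⁻¹) * (rpow_mul_gfun_zfun α ρ hy hyx)
    - ((x - y) ^ (α - 1) * (∫ u in (1:ℝ)..zfun x y, psiRhoHat α ρ u)
        - max (α - 1) 0 * (∫ u in (1:ℝ)..y, psiRhoHat α ρ u)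
          * ∫ u in (1:ℝ)..x, psiRho α ρ u) / gfun α ρ y * hconst
    - sin (π * (α * (1 - ρ))) * (x - y) ^ (α - 1) / gfun α ρ y * hftc

/-- Lemma 3.1 (case `x > y > 1`): pointwise relation between `v₁` and the Green
function `U(x,y)`. -/
theorem stmt_1 (α ρ : ℝ) (hα0 : 0 < α) (hα2 : α < 2) (hρ0 : 0 < ρ) (hρ1 : ρ < 1)
    (hαρ : α * ρ < 1) (hαρh : α * (1 - ρ) < 1)
    (x y : ℝ) (hy : 1 < y) (hyx : y < x) :
    v1fun α ρ x
      = 2 ^ (α * (1 - ρ) - 1) * cRho α ρ * Ufun α ρ x y / gfun α ρ y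
        - Real.sin (π * (α * (1 - ρ))) * (1 - α * (1 - ρ)) * ((x - y) ^ (α - 1) / gfun α ρ y)
            * (∫ u in (1:ℝ)..zfun x y, (u - 1) ^ (α * ρ) * (u + 1) ^ (α * (1 - ρ) - 2))
        + max (α - 1) 0 * Real.sin (π * (α * (1 - ρ))) * (∫ u in (1:ℝ)..x, psiRho α ρ u)
            * ((α * ρ / gfun α ρ y) * (∫ u in (1:ℝ)..y, psiRhoHat α ρ u) - 1) :=
  stmt_1_general α ρ hα0 hρ0 hρ1 hαρh x y hy hyx
end

section
/- For all x < −1 and y > 1: v₁(x) = 2^{αρ̂−1}·c_{αρ}·U(x,y)/g(y) − sin(παρ)·(1−αρ̂)·((y−x)^{α−1}/g(y))·∫₁^{z(x,y)} (u−1)^{αρ}(u+1)^{αρ̂−2} du + (α−1)₊·sin(παρ)·(∫₁^{|x|} ψ_{αρ̂}(u) du)·((αρ/g(y))·∫₁^y ψ_{αρ̂}(u) du − 1). -/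
open Real MeasureTheory Set Filter intervalIntegral
open scoped Topology

/-!
Differentiating `(u - 1)^{αρ} (u + 1)^{αρ̂ - 1}` and integrating from `1` to `z = z(x, y)` gives
`αρ ∫₁^z ψ_{αρ̂} + (αρ̂ - 1) ∫₁^z (u - 1)^{αρ} (u + 1)^{αρ̂ - 2} = (z - 1)^{αρ} (z + 1)^{αρ̂ - 1}`.
For `x < -1 < 1 < y` one has `z - 1 = (|x| - 1)(y - 1)/(y - x)` and `z + 1 = (|x| + 1)(y + 1)/(y - x)`,
so multiplying by `(y - x)^{α - 1}` turns the right-hand side into `(|x| - 1) ψ_{αρ̂}(|x|) g(y)`.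
By Euler's reflection formula `Γ(αρ̂) Γ(1 - αρ̂) sin(παρ̂) = π`, the constant `2^{αρ̂ - 1} c_{αρ}` times
the prefactor of `U` is `αρ sin(παρ)`; the identity is then linear algebra in the integrals.
-/

section RpowWeight

variable {s : ℝ} (t : ℝ)

lemma continuousOn_rpow_sub_one_mul_rpow_add_one (hs : 0 ≤ s) :
    ContinuousOn (fun u : ℝ => (u - 1) ^ s * (u + 1) ^ t) (Ici 1) := by
  refine ContinuousOn.mul (.rpow_const (by fun_prop) fun _ _ => Or.inr hs)
    (.rpow_const (by fun_prop) fun u hu => Or.inl ?_)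
  linarith [mem_Ici.1 hu]

lemma intervalIntegrable_rpow_sub_one_mul_rpow_add_one (hs : 0 < s) {z : ℝ} (hz : 1 ≤ z) :
    IntervalIntegrable (fun u : ℝ => (u - 1) ^ (s - 1) * (u + 1) ^ t) volume 1 z := by
  have hsing : IntervalIntegrable (fun u : ℝ => (u - 1) ^ (s - 1)) volume 1 z := by
    simpa using (intervalIntegrable_rpow' (a := 0) (b := z - 1) (r := s - 1)
      (by linarith)).comp_sub_right 1
  refine hsing.mul_continuousOn (.rpow_const (by fun_prop) fun u hu => Or.inl ?_)
  rw [uIcc_of_le hz] at hu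
  linarith [hu.1]

lemma hasDerivAt_rpow_sub_one_mul_rpow_add_one {u : ℝ} (hu : 1 < u) :
    HasDerivAt (fun u : ℝ => (u - 1) ^ s * (u + 1) ^ t)
      (s * ((u - 1) ^ (s - 1) * (u + 1) ^ t) + t * ((u - 1) ^ s * (u + 1) ^ (t - 1))) u := by
  have hsub : HasDerivAt (fun u : ℝ => (u - 1) ^ s) (s * (u - 1) ^ (s - 1)) u := by
    simpa using ((hasDerivAt_id' u).sub_const 1).rpow_const (p := s) (Or.inl (by linarith))
  have hadd : HasDerivAt (fun u : ℝ => (u + 1) ^ t) (t * (u + 1) ^ (t - 1)) u := by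
    simpa [mul_comm] using
      ((hasDerivAt_id' u).add_const 1).rpow_const (p := t) (Or.inl (by linarith))
  exact (hsub.mul hadd).congr_deriv (by ring)

lemma rpow_sub_one_mul_rpow_add_one_eq_integral (hs : 0 < s) {z : ℝ} (hz : 1 ≤ z) :
    (z - 1) ^ s * (z + 1) ^ t
      = s * (∫ u in (1:ℝ)..z, (u - 1) ^ (s - 1) * (u + 1) ^ t)
        + t * ∫ u in (1:ℝ)..z, (u - 1) ^ s * (u + 1) ^ (t - 1) := by
  have hsing := (intervalIntegrable_rpow_sub_one_mul_rpow_add_one t hs hz).const_mul s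
  have hreg := ((continuousOn_rpow_sub_one_mul_rpow_add_one (t - 1) hs.le).mono
    Icc_subset_Ici_self).intervalIntegrable_of_Icc (μ := volume) hz |>.const_mul t
  have hftc := integral_eq_sub_of_hasDerivAt_of_le hz
    ((continuousOn_rpow_sub_one_mul_rpow_add_one t hs.le).mono Icc_subset_Ici_self)
    (fun u hu => hasDerivAt_rpow_sub_one_mul_rpow_add_one t hu.1) (hsing.add hreg)
  rw [intervalIntegral.integral_add hsing hreg, intervalIntegral.integral_const_mul,
    intervalIntegral.integral_const_mul] at hftc
  simp [hftc, zero_rpow hs.ne']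

end RpowWeight

lemma sub_one_mul_psiRhoHat (α ρ : ℝ) {w : ℝ} (hw : 1 < w) :
    (w - 1) * psiRhoHat α ρ w = (w - 1) ^ (α * ρ) * (w + 1) ^ (α * (1 - ρ) - 1) := by
  have hw1 : w - 1 ≠ 0 := by linarith
  rw [psiRhoHat, rpow_sub_one hw1]
  field_simp

section Zfun

variable {x y : ℝ} (hx : x < -1) (hy : 1 < y)
include hx hy

lemma zfun_eq_of_lt_neg_one_of_one_lt : zfun x y = (x * y - 1) / (x - y) := by
  rw [zfun, abs_of_neg (by nlinarith), abs_of_neg (by linarith), neg_div_neg_eq]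

lemma zfun_sub_one_of_lt_neg_one_of_one_lt : zfun x y - 1 = (-x - 1) * (y - 1) / (y - x) := by
  rw [zfun_eq_of_lt_neg_one_of_one_lt hx hy]
  field_simp [show x - y ≠ 0 by linarith, show y - x ≠ 0 by linarith]
  ring

lemma zfun_add_one_of_lt_neg_one_of_one_lt : zfun x y + 1 = (-x + 1) * (y + 1) / (y - x) := by
  rw [zfun_eq_of_lt_neg_one_of_one_lt hx hy]
  field_simp [show x - y ≠ 0 by linarith, show y - x ≠ 0 by linarith]
  ring

lemma one_lt_zfun_of_lt_neg_one_of_one_lt : 1 < zfun x y := by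
  have : 0 < (-x - 1) * (y - 1) / (y - x) :=
    div_pos (mul_pos (by linarith) (by linarith)) (by linarith)
  linarith [zfun_sub_one_of_lt_neg_one_of_one_lt hx hy]

lemma rpow_mul_zfun_weight (s t : ℝ) :
    (y - x) ^ (s + t - 1) * ((zfun x y - 1) ^ s * (zfun x y + 1) ^ (t - 1))
      = ((-x - 1) ^ s * (-x + 1) ^ (t - 1)) * ((y - 1) ^ s * (y + 1) ^ (t - 1)) := by
  have hyx : 0 < y - x := by linarith
  rw [zfun_sub_one_of_lt_neg_one_of_one_lt hx hy, zfun_add_one_of_lt_neg_one_of_one_lt hx hy,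
    div_rpow (by nlinarith) hyx.le, div_rpow (by nlinarith) hyx.le,
    mul_rpow (by linarith) (by linarith), mul_rpow (by linarith) (by linarith),
    show s + t - 1 = s + (t - 1) by ring, rpow_add hyx]
  have : (y - x) ^ s ≠ 0 := (rpow_pos_of_pos hyx _).ne'
  have : (y - x) ^ (t - 1) ≠ 0 := (rpow_pos_of_pos hyx _).ne'
  field_simp

lemma sub_one_mul_psiRhoHat_abs_mul_gfun (α ρ : ℝ) (hs : 0 < α * ρ) :
    (|x| - 1) * psiRhoHat α ρ |x| * gfun α ρ y
      = (y - x) ^ (α - 1) * (α * ρ * (∫ u in (1:ℝ)..zfun x y, psiRhoHat α ρ u)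
        + (α * (1 - ρ) - 1)
          * ∫ u in (1:ℝ)..zfun x y, (u - 1) ^ (α * ρ) * (u + 1) ^ (α * (1 - ρ) - 2)) := by
  have hparts := rpow_sub_one_mul_rpow_add_one_eq_integral (α * (1 - ρ) - 1) hs
    (one_lt_zfun_of_lt_neg_one_of_one_lt hx hy).le
  rw [show α * (1 - ρ) - 1 - 1 = α * (1 - ρ) - 2 by ring] at hparts
  have hweight := rpow_mul_zfun_weight hx hy (α * ρ) (α * (1 - ρ))
  rw [show α * ρ + α * (1 - ρ) - 1 = α - 1 by ring, hparts] at hweight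
  rw [abs_of_neg (by linarith), sub_one_mul_psiRhoHat α ρ (by linarith)]
  exact hweight.symm

end Zfun

lemma two_rpow_mul_cRho_mul_Ufun_prefactor (α ρ : ℝ) (hs : 0 < α * ρ) (ht : 0 < α * (1 - ρ))
    (ht1 : α * (1 - ρ) < 1) :
    2 ^ (α * (1 - ρ) - 1) * cRho α ρ * ((sin (π * (α * ρ)) / sin (π * (α * (1 - ρ)))) *
      (2 ^ (1 - α) / (Gamma (α * ρ) * Gamma (α * (1 - ρ))))) = sin (π * (α * ρ)) * (α * ρ) := by
  have hsin : 0 < sin (π * (α * (1 - ρ))) :=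
    sin_pos_of_pos_of_lt_pi (by positivity) (by nlinarith [pi_pos])
  have hreflect : Gamma (α * (1 - ρ)) * Gamma (1 - α * (1 - ρ)) * sin (π * (α * (1 - ρ))) = π := by
    rw [Gamma_mul_Gamma_one_sub, div_mul_cancel₀ _ hsin.ne']
  have htwo : (2 : ℝ) ^ (α * (1 - ρ) - 1) * 2 ^ (α * ρ) * 2 ^ (1 - α) = 1 := by
    rw [← rpow_add two_pos, ← rpow_add two_pos]
    convert rpow_zero (2 : ℝ) using 2
    ring
  have hΓs := (Gamma_pos_of_pos hs).ne'
  have hΓt := (Gamma_pos_of_pos ht).ne'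
  have hΓt' := (Gamma_pos_of_pos (sub_pos.2 ht1)).ne'
  have hsin' : sin (α * (1 - ρ) * π) ≠ 0 := by rw [mul_comm]; exact hsin.ne'
  rw [cRho]
  field_simp
  linear_combination (norm := ring_nf)
    (α * ρ * sin (π * (α * ρ)) * π) * htwo - (α * ρ * sin (π * (α * ρ))) * hreflect

lemma two_rpow_mul_cRho_mul_Ufun_of_not_one_lt (α ρ : ℝ) (hs : 0 < α * ρ) (ht : 0 < α * (1 - ρ))
    (ht1 : α * (1 - ρ) < 1) {x : ℝ} (hx : ¬ 1 < x) (y : ℝ) :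
    2 ^ (α * (1 - ρ) - 1) * cRho α ρ * Ufun α ρ x y
      = sin (π * (α * ρ)) * (α * ρ) *
        ((y - x) ^ (α - 1) * (∫ u in (1:ℝ)..zfun x y, psiRhoHat α ρ u)
          - max (α - 1) 0 * (∫ u in (1:ℝ)..y, psiRhoHat α ρ u)
            * ∫ u in (1:ℝ)..|x|, psiRhoHat α ρ u) := by
  rw [Ufun, if_neg hx, ← two_rpow_mul_cRho_mul_Ufun_prefactor α ρ hs ht ht1]
  ring

theorem stmt_2_general (α ρ : ℝ) (hα0 : 0 < α) (hρ0 : 0 < ρ) (hρ1 : ρ < 1)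
    (hαρh : α * (1 - ρ) < 1)
    (x y : ℝ) (hx : x < -1) (hy : 1 < y) :
    v1fun α ρ x
      = 2 ^ (α * (1 - ρ) - 1) * cRho α ρ * Ufun α ρ x y / gfun α ρ y
        - Real.sin (π * (α * ρ)) * (1 - α * (1 - ρ)) * ((y - x) ^ (α - 1) / gfun α ρ y)
            * (∫ u in (1:ℝ)..zfun x y, (u - 1) ^ (α * ρ) * (u + 1) ^ (α * (1 - ρ) - 2))
        + max (α - 1) 0 * Real.sin (π * (α * ρ)) * (∫ u in (1:ℝ)..|x|, psiRhoHat α ρ u)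
            * ((α * ρ / gfun α ρ y) * (∫ u in (1:ℝ)..y, psiRhoHat α ρ u) - 1) := by
  have hs : 0 < α * ρ := mul_pos hα0 hρ0
  have hx1 : ¬ 1 < x := by linarith
  have hweight := sub_one_mul_psiRhoHat_abs_mul_gfun hx hy α ρ hs
  have hg : 0 < gfun α ρ y :=
    mul_pos (rpow_pos_of_pos (by linarith) _) (rpow_pos_of_pos (by linarith) _)
  rw [v1fun, if_neg hx1, two_rpow_mul_cRho_mul_Ufun_of_not_one_lt α ρ hs
    (mul_pos hα0 (sub_pos.2 hρ1)) hαρh hx1]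
  field_simp
  linear_combination sin (π * α * ρ) * hweight

/-- Lemma 3.1 (case `x < −1`, `y > 1`): pointwise relation between `v₁` and the Green
function `U(x,y)`. -/
theorem stmt_2 (α ρ : ℝ) (hα0 : 0 < α) (hα2 : α < 2) (hρ0 : 0 < ρ) (hρ1 : ρ < 1)
    (hαρ : α * ρ < 1) (hαρh : α * (1 - ρ) < 1)
    (x y : ℝ) (hx : x < -1) (hy : 1 < y) :
    v1fun α ρ x
      = 2 ^ (α * (1 - ρ) - 1) * cRho α ρ * Ufun α ρ x y / gfun α ρ y
        - Real.sin (π * (α * ρ)) * (1 - α * (1 - ρ)) * ((y - x) ^ (α - 1) / gfun α ρ y)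
            * (∫ u in (1:ℝ)..zfun x y, (u - 1) ^ (α * ρ) * (u + 1) ^ (α * (1 - ρ) - 2))
        + max (α - 1) 0 * Real.sin (π * (α * ρ)) * (∫ u in (1:ℝ)..|x|, psiRhoHat α ρ u)
            * ((α * ρ / gfun α ρ y) * (∫ u in (1:ℝ)..y, psiRhoHat α ρ u) - 1) :=
  stmt_2_general α ρ hα0 hρ0 hρ1 hαρh x y hx hy
end

section
/- For every x with |x| > 1, the function y ↦ (1/g(y))·∫₁^{z(x,y)} (u−1)^{αρ}(u+1)^{αρ̂−2} du tends to 0 as y → 1 from the right. -/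
open Real MeasureTheory Set Filter intervalIntegral
open scoped Topology

/-! On `[1, z]` the integrand is at most `(z - 1)^{αρ} 2^{αρ̂-2}`, and `z(x,y) - 1` is at most
`|x + 1| (y - 1) / |x - y|` by the reverse triangle inequality, since `(xy - 1) - (x - y)` factors
as `(x + 1)(y - 1)`. Hence the integral is `O((y - 1)^{αρ + 1})`, while `g(y)` is of exact order
`(y - 1)^{αρ}`, so the quotient is `O(y - 1)`. -/

lemma one_le_zfun {x y : ℝ} (hx : 1 ≤ |x|) (hy : 1 ≤ |y|) (hxy : x ≠ y) : 1 ≤ zfun x y := by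
  rw [zfun, one_le_div (abs_pos.2 (sub_ne_zero.2 hxy)), ← sq_le_sq]
  have hx2 : 1 ≤ x ^ 2 := one_le_sq_iff_one_le_abs x |>.2 hx
  have hy2 : 1 ≤ y ^ 2 := one_le_sq_iff_one_le_abs y |>.2 hy
  nlinarith [mul_nonneg (sub_nonneg.2 hx2) (sub_nonneg.2 hy2)]

lemma zfun_sub_one_le {x y : ℝ} (hxy : x ≠ y) :
    zfun x y - 1 ≤ |x + 1| * |y - 1| / |x - y| := by
  rw [zfun, div_sub_one (abs_ne_zero.2 (sub_ne_zero.2 hxy)), ← abs_mul]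
  gcongr
  calc |x * y - 1| - |x - y| ≤ |x * y - 1 - (x - y)| := abs_sub_abs_le_abs_sub _ _
    _ = |(x + 1) * (y - 1)| := by ring_nf

lemma integral_sub_one_rpow_mul_add_one_rpow_le {a c z : ℝ} (ha : 0 ≤ a) (hc : c ≤ 0)
    (hz : 1 ≤ z) :
    ∫ u in (1:ℝ)..z, (u - 1) ^ a * (u + 1) ^ c ≤ (z - 1) ^ a * 2 ^ c * (z - 1) := by
  have hbound : ∀ u ∈ uIoc 1 z, ‖(u - 1) ^ a * (u + 1) ^ c‖ ≤ (z - 1) ^ a * 2 ^ c := by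
    intro u hu
    rw [uIoc_of_le hz] at hu
    have hu1 : 0 ≤ u - 1 := by linarith [hu.1]
    have hu2 : 0 < u + 1 := by linarith
    rw [Real.norm_of_nonneg (by positivity)]
    exact mul_le_mul (Real.rpow_le_rpow hu1 (by linarith [hu.2]) ha)
      (Real.rpow_le_rpow_of_nonpos two_pos (by linarith) hc) (by positivity)
      (Real.rpow_nonneg (by linarith) a)
  calc ∫ u in (1:ℝ)..z, (u - 1) ^ a * (u + 1) ^ c
      ≤ ‖∫ u in (1:ℝ)..z, (u - 1) ^ a * (u + 1) ^ c‖ := Real.le_norm_self _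
    _ ≤ (z - 1) ^ a * 2 ^ c * |z - 1| := norm_integral_le_of_norm_le_const hbound
    _ = (z - 1) ^ a * 2 ^ c * (z - 1) := by rw [abs_of_nonneg (by linarith)]

lemma one_div_gfun_mul_integral_le {α ρ x y : ℝ} (ha : 0 ≤ α * ρ) (hb : α * (1 - ρ) ≤ 2)
    (hx : 1 < |x|) (hy : 1 < y) (hxy : x ≠ y) :
    (1 / gfun α ρ y) * ∫ u in (1:ℝ)..zfun x y, (u - 1) ^ (α * ρ) * (u + 1) ^ (α * (1 - ρ) - 2)
      ≤ 2 ^ (α * (1 - ρ) - 2) * (|x + 1| / |x - y|) ^ (α * ρ) * (|x + 1| / |x - y|)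
          * (y + 1) ^ (1 - α * (1 - ρ)) * (y - 1) := by
  unfold gfun
  set a := α * ρ
  set b := α * (1 - ρ)
  set K := |x + 1| / |x - y|
  set z := zfun x y
  have hy0 : 0 < y - 1 := sub_pos.2 hy
  have hz1 : 1 ≤ z := one_le_zfun hx.le (hy.le.trans (le_abs_self y)) hxy
  have hzK : z - 1 ≤ K * (y - 1) := by
    simpa only [abs_of_pos hy0, mul_div_right_comm] using zfun_sub_one_le hxy
  have hrpow_neg : (y + 1) ^ (1 - b) = ((y + 1) ^ (b - 1))⁻¹ := by
    rw [← Real.rpow_neg (by linarith), neg_sub]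
  calc _ ≤ 1 / ((y - 1) ^ a * (y + 1) ^ (b - 1)) * ((z - 1) ^ a * 2 ^ (b - 2) * (z - 1)) := by
        gcongr
        exact integral_sub_one_rpow_mul_add_one_rpow_le ha (by linarith) hz1
    _ ≤ 1 / ((y - 1) ^ a * (y + 1) ^ (b - 1))
          * ((K * (y - 1)) ^ a * 2 ^ (b - 2) * (K * (y - 1))) := by
        gcongr
    _ = 2 ^ (b - 2) * K ^ a * K * (y + 1) ^ (1 - b) * (y - 1) := by
        rw [Real.mul_rpow (by positivity) hy0.le, hrpow_neg]
        field_simp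

theorem stmt_4_general (α ρ : ℝ) (hα0 : 0 < α) (hρ0 : 0 < ρ)
    (hαρh : α * (1 - ρ) < 1)
    (x : ℝ) (hx : 1 < |x|) :
    Tendsto (fun y : ℝ =>
        (1 / gfun α ρ y) * ∫ u in (1:ℝ)..zfun x y, (u - 1) ^ (α * ρ) * (u + 1) ^ (α * (1 - ρ) - 2))
      (𝓝[>] (1:ℝ)) (𝓝 0) := by
  have ha : 0 ≤ α * ρ := by positivity
  have hb : α * (1 - ρ) ≤ 2 := by linarith
  have hx1 : (1:ℝ) ≠ x := by rintro rfl; simp at hx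
  have hy : ∀ᶠ y in 𝓝[>] (1:ℝ), 1 < y := self_mem_nhdsWithin
  have hxy : ∀ᶠ y in 𝓝[>] (1:ℝ), x ≠ y :=
    (eventually_ne_nhds hx1).filter_mono nhdsWithin_le_nhds |>.mono fun _ h => h.symm
  set coeff := fun y : ℝ => 2 ^ (α * (1 - ρ) - 2) * (|x + 1| / |x - y|) ^ (α * ρ)
    * (|x + 1| / |x - y|) * (y + 1) ^ (1 - α * (1 - ρ))
  have hcoeff : ContinuousAt coeff 1 := by
    have hx1' : |x - 1| ≠ 0 := abs_ne_zero.2 (sub_ne_zero.2 hx1.symm)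
    fun_prop (disch := first | exact hx1' | exact Or.inr ha | norm_num)
  have hbound : Tendsto (fun y => coeff y * (y - 1)) (𝓝 1) (𝓝 0) := by
    simpa using hcoeff.tendsto.mul (tendsto_id.sub_const 1)
  refine squeeze_zero' ?_ ?_ (hbound.mono_left nhdsWithin_le_nhds)
  · filter_upwards [hy, hxy] with y hy hxy
    have hz1 : 1 ≤ zfun x y := one_le_zfun hx.le (hy.le.trans (le_abs_self y)) hxy
    refine mul_nonneg ?_ (intervalIntegral.integral_nonneg hz1 fun u hu => ?_)
    · unfold gfun; positivity
    · have hu1 : 0 ≤ u - 1 := by linarith [hu.1]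
      exact mul_nonneg (Real.rpow_nonneg hu1 _) (Real.rpow_nonneg (by linarith) _)
  · filter_upwards [hy, hxy] with y hy hxy
    exact one_div_gfun_mul_integral_le ha hb hx hy hxy

/-- As `y → 1⁺`, `(1/g(y))·∫₁^{z(x,y)} (u−1)^{αρ}(u+1)^{αρ̂−2} du → 0` for `|x| > 1`. -/
theorem stmt_4 (α ρ : ℝ) (hα0 : 0 < α) (hα2 : α < 2) (hρ0 : 0 < ρ) (hρ1 : ρ < 1)
    (hαρ : α * ρ < 1) (hαρh : α * (1 - ρ) < 1)
    (x : ℝ) (hx : 1 < |x|) :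
    Tendsto (fun y : ℝ =>
        (1 / gfun α ρ y) * ∫ u in (1:ℝ)..zfun x y, (u - 1) ^ (α * ρ) * (u + 1) ^ (α * (1 - ρ) - 2))
      (𝓝[>] (1:ℝ)) (𝓝 0) :=
  stmt_4_general α ρ hα0 hρ0 hαρh x hx
end

section
/- The constant C₁ := ∫₁^∞ (u+1)^{αρ̂−2} du is finite, and for every y > 1 and every real w with either w > y or w < −1, one has ∫₁^{z(w,y)} (u−1)^{αρ}(u+1)^{αρ̂−2} du ≤ C₁·(|w|+1)^{αρ}·(y−1)^{αρ}/|w−y|^{αρ}. -/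
open Real MeasureTheory Set Filter intervalIntegral
open scoped Topology

/-- The constant `C₁ = ∫₁^∞ (u+1)^{αρ̂−2} du` is finite, and for `y > 1` and `w > y` or
`w < −1`, `∫₁^{z(w,y)} (u−1)^{αρ}(u+1)^{αρ̂−2} du ≤ C₁·(|w|+1)^{αρ}·(y−1)^{αρ}/|w−y|^{αρ}`. -/
theorem stmt_6 (α ρ : ℝ) (hα0 : 0 < α) (hα2 : α < 2) (hρ0 : 0 < ρ) (hρ1 : ρ < 1)
    (hαρ : α * ρ < 1) (hαρh : α * (1 - ρ) < 1) :
    IntegrableOn (fun u : ℝ => (u + 1) ^ (α * (1 - ρ) - 2)) (Set.Ioi 1) volume ∧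
    ∀ y : ℝ, 1 < y → ∀ w : ℝ, (y < w ∨ w < -1) →
      (∫ u in (1:ℝ)..zfun w y, (u - 1) ^ (α * ρ) * (u + 1) ^ (α * (1 - ρ) - 2))
        ≤ (∫ u in Set.Ioi (1:ℝ), (u + 1) ^ (α * (1 - ρ) - 2))
            * (|w| + 1) ^ (α * ρ) * (y - 1) ^ (α * ρ) / |w - y| ^ (α * ρ) := by
  have hβ : α * (1 - ρ) - 2 < -1 := by nlinarith
  have hp : 0 ≤ α * ρ := by positivity
  have hint : IntegrableOn (fun u : ℝ => (u + 1) ^ (α * (1 - ρ) - 2)) (Set.Ioi 1) volume := by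
    have h1 : IntegrableOn (fun u : ℝ => u ^ (α * (1 - ρ) - 2)) (Set.Ioi 1) volume :=
      integrableOn_Ioi_rpow_of_lt hβ one_pos
    refine Integrable.mono' h1 ?_ ?_
    · refine (ContinuousOn.aestronglyMeasurable ?_ measurableSet_Ioi)
      refine ContinuousOn.rpow_const (by fun_prop) fun x hx => Or.inl ?_
      simp only [mem_Ioi] at hx; intro hc; linarith
    · filter_upwards [ae_restrict_mem measurableSet_Ioi] with u hu
      have hu1 : (1:ℝ) < u := hu
      rw [Real.norm_eq_abs, abs_of_nonneg (Real.rpow_nonneg (by linarith) _)]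
      exact Real.rpow_le_rpow_of_nonpos (by linarith) (by linarith) (by linarith)
  refine ⟨hint, ?_⟩
  intro y hy w hw
  set C₁ := ∫ u in Set.Ioi (1:ℝ), (u + 1) ^ (α * (1 - ρ) - 2) with hC₁
  have hC₁0 : 0 ≤ C₁ :=
    setIntegral_nonneg measurableSet_Ioi fun u hu =>
      Real.rpow_nonneg (by simp only [mem_Ioi] at hu; linarith) _
  have hD : 0 < |w - y| := by
    rcases hw with h | h <;> [skip; skip] <;> rw [abs_pos, sub_ne_zero] <;>
      rintro rfl <;> linarith
  set z := zfun w y with hzdef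
  have hkey : z - 1 ≤ (|w| + 1) * (y - 1) / |w - y| := by
    rcases hw with h | h
    · have hw1 : 1 < w := hy.trans h
      rw [hzdef, zfun, abs_of_pos (by nlinarith : (0:ℝ) < w * y - 1),
        abs_of_pos (by linarith : (0:ℝ) < w - y), abs_of_pos (by linarith : (0:ℝ) < w),
        div_sub_one (by linarith : w - y ≠ 0), div_le_div_iff_of_pos_right (by linarith : (0:ℝ) < w - y)]
      nlinarith
    · rw [hzdef, zfun, abs_of_neg (by nlinarith : w * y - 1 < 0),
        abs_of_neg (by nlinarith : w - y < 0), abs_of_neg (by linarith : w < 0),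
        div_sub_one (by linarith : -(w - y) ≠ 0), div_le_div_iff_of_pos_right (by linarith : (0:ℝ) < -(w - y))]
      nlinarith
  have hz1 : (1:ℝ) ≤ z := by
    rcases hw with h | h
    · have hw1 : 1 < w := hy.trans h
      rw [hzdef, zfun, abs_of_pos (by nlinarith : (0:ℝ) < w * y - 1),
        abs_of_pos (by linarith : (0:ℝ) < w - y), le_div_iff₀ (by linarith)]
      nlinarith
    · rw [hzdef, zfun, abs_of_neg (by nlinarith : w * y - 1 < 0),
        abs_of_neg (by nlinarith : w - y < 0), le_div_iff₀ (by linarith : (0:ℝ) < -(w - y))]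
      nlinarith
  have hz0 : 0 ≤ z - 1 := by linarith
  -- continuity facts
  have hcont2 : ContinuousOn (fun u : ℝ => (u + 1) ^ (α * (1 - ρ) - 2)) (Set.Icc 1 z) := by
    refine ContinuousOn.rpow_const (by fun_prop) fun x hx => Or.inl ?_
    have := hx.1; intro hc; linarith [hx.1]
  have hcont1 : Continuous (fun u : ℝ => (u - 1) ^ (α * ρ)) :=
    (continuous_id.sub continuous_const).rpow_const fun x => Or.inr hp
  have hcontF : ContinuousOn (fun u : ℝ => (u - 1) ^ (α * ρ) * (u + 1) ^ (α * (1 - ρ) - 2))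
      (Set.Icc 1 z) := hcont1.continuousOn.mul hcont2
  have hintF : IntervalIntegrable
      (fun u : ℝ => (u - 1) ^ (α * ρ) * (u + 1) ^ (α * (1 - ρ) - 2)) volume 1 z := by
    apply ContinuousOn.intervalIntegrable; rwa [Set.uIcc_of_le hz1]
  have hintG : IntervalIntegrable
      (fun u : ℝ => (z - 1) ^ (α * ρ) * (u + 1) ^ (α * (1 - ρ) - 2)) volume 1 z := by
    apply ContinuousOn.intervalIntegrable
    rw [Set.uIcc_of_le hz1]; exact continuousOn_const.mul hcont2
  have step1 : (∫ u in (1:ℝ)..z, (u - 1) ^ (α * ρ) * (u + 1) ^ (α * (1 - ρ) - 2))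
      ≤ ∫ u in (1:ℝ)..z, (z - 1) ^ (α * ρ) * (u + 1) ^ (α * (1 - ρ) - 2) := by
    refine intervalIntegral.integral_mono_on hz1 hintF hintG fun u hu => ?_
    refine mul_le_mul_of_nonneg_right
      (Real.rpow_le_rpow (by linarith [hu.1]) (by linarith [hu.2]) hp)
      (Real.rpow_nonneg (by linarith [hu.1]) _)
  have step2 : (∫ u in (1:ℝ)..z, (z - 1) ^ (α * ρ) * (u + 1) ^ (α * (1 - ρ) - 2))
      = (z - 1) ^ (α * ρ) * ∫ u in (1:ℝ)..z, (u + 1) ^ (α * (1 - ρ) - 2) :=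
    intervalIntegral.integral_const_mul _ _
  have step3 : (∫ u in (1:ℝ)..z, (u + 1) ^ (α * (1 - ρ) - 2)) ≤ C₁ := by
    rw [intervalIntegral.integral_of_le hz1, hC₁]
    refine setIntegral_mono_set hint ?_ (HasSubset.Subset.eventuallyLE Set.Ioc_subset_Ioi_self)
    filter_upwards [ae_restrict_mem measurableSet_Ioi] with u hu
    exact Real.rpow_nonneg (by simp only [mem_Ioi] at hu; linarith) _
  have hG0 : 0 ≤ (z - 1) ^ (α * ρ) := Real.rpow_nonneg hz0 _
  have step4 : (z - 1) ^ (α * ρ) * (∫ u in (1:ℝ)..z, (u + 1) ^ (α * (1 - ρ) - 2))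
      ≤ (z - 1) ^ (α * ρ) * C₁ := mul_le_mul_of_nonneg_left step3 hG0
  have hub : (z - 1) ^ (α * ρ) ≤ (|w| + 1) ^ (α * ρ) * (y - 1) ^ (α * ρ) / |w - y| ^ (α * ρ) := by
    have h1 : (z - 1) ^ (α * ρ) ≤ ((|w| + 1) * (y - 1) / |w - y|) ^ (α * ρ) :=
      Real.rpow_le_rpow hz0 hkey hp
    rwa [Real.div_rpow (by nlinarith [abs_nonneg w]) (abs_nonneg _),
      Real.mul_rpow (by positivity) (by linarith)] at h1
  calc (∫ u in (1:ℝ)..z, (u - 1) ^ (α * ρ) * (u + 1) ^ (α * (1 - ρ) - 2))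
      ≤ (z - 1) ^ (α * ρ) * C₁ := by rw [← step2] at step4; exact step1.trans step4
    _ ≤ ((|w| + 1) ^ (α * ρ) * (y - 1) ^ (α * ρ) / |w - y| ^ (α * ρ)) * C₁ :=
        mul_le_mul_of_nonneg_right hub hC₁0
    _ = C₁ * (|w| + 1) ^ (α * ρ) * (y - 1) ^ (α * ρ) / |w - y| ^ (α * ρ) := by ring
end

section
/- For every fixed real w with w > 1 or w < −1, the function y ↦ (|w−y|^{α−1}/g(y))·∫₁^{z(w,y)} (u−1)^{αρ}(u+1)^{αρ̂−2} du tends to 0 as y → 1 from the right. -/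
open Real MeasureTheory Set Filter intervalIntegral
open scoped Topology

/-! Since `wy − 1 = (w − y) + (y − 1)(w + 1)` and, for `y` near `1`, both summands have the sign of
`w + 1`, we get `z(w,y) − 1 = (y − 1)·|w + 1|/|w − y|`. The integrand is at most `2^{αρ̂−2}(u − 1)^{αρ}`
on `[1, z]`, so the integral is `O((z − 1)^{1+αρ}) = O((y − 1)^{1+αρ})`, and dividing by
`g(y) ≍ (y − 1)^{αρ}` leaves a factor `y − 1`. -/

lemma zfun_eq_one_add {w y : ℝ} (hy : 1 ≤ y) (hwy : 0 < (w - y) * (w + 1)) :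
    zfun w y = 1 + (y - 1) * (|w + 1| / |w - y|) := by
  have hsplit : w * y - 1 = (w - y) + (y - 1) * (w + 1) := by ring
  have hw_ne : w - y ≠ 0 := by rintro h; simp [h] at hwy
  have habs : |w * y - 1| = |w - y| + (y - 1) * |w + 1| := by
    rcases pos_and_pos_or_neg_and_neg_of_mul_pos hwy with ⟨h₁, h₂⟩ | ⟨h₁, h₂⟩
    · rw [abs_of_pos h₁, abs_of_pos h₂, hsplit, abs_of_nonneg (by positivity)]
    · rw [abs_of_neg h₁, abs_of_neg h₂, hsplit, abs_of_nonpos (by nlinarith)]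
      ring
  rw [zfun, habs]
  field_simp

lemma norm_integral_rpow_mul_rpow_le {a b z : ℝ} (ha : 0 ≤ a) (hb : b ≤ 0) (hz : 1 ≤ z) :
    ‖∫ u in (1:ℝ)..z, (u - 1) ^ a * (u + 1) ^ b‖ ≤ (z - 1) ^ a * 2 ^ b * (z - 1) := by
  have hz1 : 0 ≤ z - 1 := by linarith
  have hbound : ∀ u ∈ uIoc (1:ℝ) z, ‖(u - 1) ^ a * (u + 1) ^ b‖ ≤ (z - 1) ^ a * 2 ^ b := by
    intro u hu
    rw [uIoc_of_le hz] at hu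
    have hu1 : 0 ≤ u - 1 := by linarith [hu.1]
    have hu2 : 0 ≤ u + 1 := by linarith [hu.1]
    rw [Real.norm_of_nonneg (by positivity)]
    exact mul_le_mul (rpow_le_rpow hu1 (by linarith [hu.2]) ha)
      (rpow_le_rpow_of_nonpos (by norm_num) (by linarith) hb) (by positivity) (by positivity)
  simpa [abs_of_nonneg hz1] using norm_integral_le_of_norm_le_const hbound

lemma norm_mul_integral_le {α ρ w y : ℝ} (hαρ : 0 ≤ α * ρ) (hαρh : α * (1 - ρ) ≤ 2) (hy : 1 < y)
    (hwy : 0 < (w - y) * (w + 1)) :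
    ‖(|w - y| ^ (α - 1) / gfun α ρ y)
        * ∫ u in (1:ℝ)..zfun w y, (u - 1) ^ (α * ρ) * (u + 1) ^ (α * (1 - ρ) - 2)‖
      ≤ (y - 1) * (|w - y| ^ (α - 1) * (|w + 1| / |w - y|) ^ (α * ρ) * 2 ^ (α * (1 - ρ) - 2)
          * (|w + 1| / |w - y|) / (y + 1) ^ (α * (1 - ρ) - 1)) := by
  set t := |w + 1| / |w - y|
  have hy1 : 0 < y - 1 := by linarith
  have hz : zfun w y - 1 = (y - 1) * t := by rw [zfun_eq_one_add hy.le hwy]; ring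
  have hz1 : 1 ≤ zfun w y := by
    rw [zfun_eq_one_add hy.le hwy]; exact le_add_of_nonneg_right (by positivity)
  have hg : 0 < gfun α ρ y := by unfold gfun; positivity
  calc _ = |w - y| ^ (α - 1) / gfun α ρ y
        * ‖∫ u in (1:ℝ)..zfun w y, (u - 1) ^ (α * ρ) * (u + 1) ^ (α * (1 - ρ) - 2)‖ := by
        rw [norm_mul, Real.norm_of_nonneg (by positivity)]
    _ ≤ |w - y| ^ (α - 1) / gfun α ρ y * ((zfun w y - 1) ^ (α * ρ) * 2 ^ (α * (1 - ρ) - 2)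
          * (zfun w y - 1)) := by
        gcongr
        exact norm_integral_rpow_mul_rpow_le hαρ (by linarith) hz1
    _ = _ := by
        rw [hz, mul_rpow hy1.le (by positivity), gfun]
        field_simp

theorem stmt_7_general (α ρ : ℝ) (hα0 : 0 < α) (hρ0 : 0 < ρ)
    (hαρh : α * (1 - ρ) < 1)
    (w : ℝ) (hw : 1 < w ∨ w < -1) :
    Tendsto (fun y : ℝ =>
        (|w - y| ^ (α - 1) / gfun α ρ y)
          * ∫ u in (1:ℝ)..zfun w y, (u - 1) ^ (α * ρ) * (u + 1) ^ (α * (1 - ρ) - 2))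
      (𝓝[>] (1:ℝ)) (𝓝 0) := by
  have hαρ0 : 0 ≤ α * ρ := (mul_pos hα0 hρ0).le
  have hw1 : 0 < (w - 1) * (w + 1) := by rcases hw with h | h <;> nlinarith
  have hnear : ∀ᶠ y in 𝓝[>] (1:ℝ), 1 < y ∧ 0 < (w - y) * (w + 1) :=
    eventually_mem_nhdsWithin.and <| nhdsWithin_le_nhds <|
      (by fun_prop : Continuous fun y : ℝ => (w - y) * (w + 1)).continuousAt.eventually
        (lt_mem_nhds hw1)
  have hw1' : |w - 1| ≠ 0 := by rw [abs_ne_zero]; rintro h; simp [h] at hw1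
  have hbound : ContinuousAt (fun y : ℝ => (y - 1) * (|w - y| ^ (α - 1)
      * (|w + 1| / |w - y|) ^ (α * ρ) * 2 ^ (α * (1 - ρ) - 2) * (|w + 1| / |w - y|)
      / (y + 1) ^ (α * (1 - ρ) - 1))) 1 := by
    fun_prop (disch :=
      first | exact Or.inl hw1' | exact Or.inr hαρ0 | (left; positivity) | positivity)
  refine squeeze_zero_norm' (hnear.mono fun y hy ↦
    norm_mul_integral_le hαρ0 (by linarith) hy.1 hy.2) ?_
  simpa using hbound.tendsto.mono_left nhdsWithin_le_nhds

/-- For fixed `w` with `w > 1` or `w < −1`,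
`(|w−y|^{α−1}/g(y))·∫₁^{z(w,y)} (u−1)^{αρ}(u+1)^{αρ̂−2} du → 0` as `y → 1⁺`. -/
theorem stmt_7 (α ρ : ℝ) (hα0 : 0 < α) (hα2 : α < 2) (hρ0 : 0 < ρ) (hρ1 : ρ < 1)
    (hαρ : α * ρ < 1) (hαρh : α * (1 - ρ) < 1)
    (w : ℝ) (hw : 1 < w ∨ w < -1) :
    Tendsto (fun y : ℝ =>
        (|w - y| ^ (α - 1) / gfun α ρ y)
          * ∫ u in (1:ℝ)..zfun w y, (u - 1) ^ (α * ρ) * (u + 1) ^ (α * (1 - ρ) - 2))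
      (𝓝[>] (1:ℝ)) (𝓝 0) :=
  stmt_7_general α ρ hα0 hρ0 hαρh w hw
end

section
/- For every x > 1, the function ε ↦ ε^{αρ̂−1}·∫_{1/(1+ε)}^1 (1+s)^{−αρ}·(1−s)^{−αρ̂}·(x/(1+ε) − s)^{−1} ds tends to 2^{−αρ} / ((1−αρ̂)·(x−1)) as ε → 0 from the right. -/
open Real MeasureTheory Set Filter intervalIntegral
open scoped Topology

/-! On `[a, 1]` the weight `(1 - s) ^ (-β)` has mass `(1 - a) ^ (1 - β) / (1 - β)`, so
`(1 - a) ^ (β - 1) * ∫ s in a..1, g s * (1 - s) ^ (-β)` is `1 / (1 - β)` times a weighted mean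
of `g` over `[a, 1]`; it tends to `L / (1 - β)` as `a → 1⁻` as soon as `g` tends to `L` uniformly
near `s = 1`. Here `a = 1 / (1 + ε)`, so that `ε ^ (β - 1) = (1 + ε) ^ (β - 1) * (1 - a) ^ (β - 1)`,
and `g ε s = (1 + s) ^ (-αρ) * (x / (1 + ε) - s)⁻¹` is jointly continuous at `(ε, s) = (0, 1)`
because `x > 1`, with value `2 ^ (-αρ) / (x - 1)` there. -/

lemma intervalIntegrable_one_sub_rpow_neg {β : ℝ} (hβ : β < 1) (a : ℝ) :
    IntervalIntegrable (fun s : ℝ => (1 - s) ^ (-β)) volume a 1 := by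
  simpa using
    (intervalIntegrable_rpow' (a := 1 - a) (b := 0) (by linarith : (-1:ℝ) < -β)).comp_sub_left 1

lemma integral_one_sub_rpow_neg {β : ℝ} (hβ : β < 1) (a : ℝ) :
    ∫ s in a..1, (1 - s) ^ (-β) = (1 - a) ^ (1 - β) / (1 - β) := by
  rw [intervalIntegral.integral_comp_sub_left (fun t : ℝ => t ^ (-β)), sub_self,
    integral_rpow (Or.inl (by linarith)), Real.zero_rpow (by linarith), neg_add_eq_sub]
  ring

lemma one_sub_rpow_mul_integral_one_sub_rpow_neg {β a : ℝ} (hβ : β < 1) (ha : a < 1) :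
    (1 - a) ^ (β - 1) * ∫ s in a..1, (1 - s) ^ (-β) = 1 / (1 - β) := by
  rw [integral_one_sub_rpow_neg hβ, mul_div_assoc', ← Real.rpow_add (by linarith)]
  norm_num

theorem tendsto_one_sub_rpow_mul_integral_mul_one_sub_rpow_neg {ι : Type*} {l : Filter ι}
    {β L : ℝ} (hβ : β < 1) {a : ι → ℝ} {g : ι → ℝ → ℝ}
    (ha : Tendsto a l (𝓝[<] 1)) (hg : Tendsto (Function.uncurry g) (l ×ˢ 𝓝 1) (𝓝 L))
    (hcont : ∀ᶠ i in l, ContinuousOn (g i) (Icc (a i) 1)) :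
    Tendsto (fun i => (1 - a i) ^ (β - 1) * ∫ s in a i..1, g i s * (1 - s) ^ (-β)) l
      (𝓝 (L / (1 - β))) := by
  have hβ' : 0 < 1 - β := by linarith
  rw [Metric.tendsto_nhds]
  intro η hη
  obtain ⟨pa, hpa, pb, hpb, hp⟩ := eventually_prod_iff.mp
    (hg.eventually (Metric.closedBall_mem_nhds L (half_pos (mul_pos hη hβ'))))
  obtain ⟨r, hr, hpbr⟩ := Metric.eventually_nhds_iff.mp hpb
  have ha1 : ∀ᶠ i in l, a i < 1 := ha self_mem_nhdsWithin
  have hanear : ∀ᶠ i in l, dist (a i) 1 < r :=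
    (tendsto_nhdsWithin_iff.mp ha).1 (Metric.ball_mem_nhds 1 hr)
  filter_upwards [hpa, hcont, ha1, hanear] with i hi hgi hai hir
  set δ := η * (1 - β) / 2 with hδ
  have hclose : ∀ s ∈ Icc (a i) 1, |g i s - L| ≤ δ := by
    intro s hs
    have hs1 : dist s 1 < r := by
      rw [Real.dist_eq, abs_of_nonpos (by linarith [hs.2])]
      rw [Real.dist_eq, abs_of_neg (by linarith)] at hir
      linarith [hs.1]
    exact hp hi (hpbr hs1)
  have hw := intervalIntegrable_one_sub_rpow_neg hβ (a i)
  have hgw : IntervalIntegrable (fun s => g i s * (1 - s) ^ (-β)) volume (a i) 1 :=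
    hw.continuousOn_mul (by rwa [uIcc_of_le hai.le])
  have hsplit : ((1 - a i) ^ (β - 1) * ∫ s in a i..1, g i s * (1 - s) ^ (-β)) - L / (1 - β) =
      (1 - a i) ^ (β - 1) * ∫ s in a i..1, (g i s - L) * (1 - s) ^ (-β) := by
    simp_rw [sub_mul]
    rw [intervalIntegral.integral_sub hgw (hw.const_mul L), intervalIntegral.integral_const_mul,
      mul_sub, mul_left_comm, one_sub_rpow_mul_integral_one_sub_rpow_neg hβ hai, mul_one_div]
  have hbound : |∫ s in a i..1, (g i s - L) * (1 - s) ^ (-β)| ≤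
      ∫ s in a i..1, δ * (1 - s) ^ (-β) := by
    rw [← Real.norm_eq_abs]
    refine intervalIntegral.norm_integral_le_of_norm_le hai.le (ae_of_all _ fun s hs => ?_)
      (hw.const_mul δ)
    have hws : 0 ≤ (1 - s) ^ (-β) := Real.rpow_nonneg (by linarith [hs.2]) _
    rw [Real.norm_eq_abs, abs_mul, abs_of_nonneg hws]
    exact mul_le_mul_of_nonneg_right (hclose s ⟨hs.1.le, hs.2⟩) hws
  have hpow : 0 < (1 - a i) ^ (β - 1) := Real.rpow_pos_of_pos (by linarith) _
  calc dist _ (L / (1 - β))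
      = (1 - a i) ^ (β - 1) * |∫ s in a i..1, (g i s - L) * (1 - s) ^ (-β)| := by
        rw [Real.dist_eq, hsplit, abs_mul, abs_of_pos hpow]
    _ ≤ (1 - a i) ^ (β - 1) * ∫ s in a i..1, δ * (1 - s) ^ (-β) := by gcongr
    _ = δ / (1 - β) := by
        rw [intervalIntegral.integral_const_mul, mul_left_comm,
          one_sub_rpow_mul_integral_one_sub_rpow_neg hβ hai, mul_one_div]
    _ < η := by rw [div_lt_iff₀ hβ']; linarith [mul_pos hη hβ']

lemma one_sub_one_div_one_add_rpow {ε : ℝ} (hε : 0 < ε) (p : ℝ) :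
    (1 + ε) ^ p * (1 - 1 / (1 + ε)) ^ p = ε ^ p := by
  have h1ε : 0 < 1 + ε := by linarith
  rw [show 1 - 1 / (1 + ε) = ε / (1 + ε) by field_simp; ring, Real.div_rpow hε.le h1ε.le,
    mul_div_cancel₀ _ (Real.rpow_pos_of_pos h1ε p).ne']

theorem tendsto_rpow_mul_integral_one_add_rpow_mul_one_sub_rpow_mul_inv {β : ℝ} (γ : ℝ)
    (hβ : β < 1) {x : ℝ} (hx : 1 < x) :
    Tendsto (fun ε : ℝ =>
        ε ^ (β - 1) * ∫ s in (1 / (1 + ε))..(1:ℝ),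
          (1 + s) ^ (-γ) * (1 - s) ^ (-β) * (x / (1 + ε) - s)⁻¹)
      (𝓝[>] (0:ℝ)) (𝓝 (2 ^ (-γ) / ((1 - β) * (x - 1)))) := by
  set g : ℝ → ℝ → ℝ := fun ε s => (1 + s) ^ (-γ) * (x / (1 + ε) - s)⁻¹
  have ha : Tendsto (fun ε : ℝ => 1 / (1 + ε)) (𝓝[>] 0) (𝓝[<] 1) := by
    refine tendsto_nhdsWithin_iff.mpr ⟨?_, ?_⟩
    · have h : ContinuousAt (fun ε : ℝ => 1 / (1 + ε)) 0 :=
        continuousAt_const.div (by fun_prop) (by norm_num)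
      simpa using h.tendsto.mono_left nhdsWithin_le_nhds
    · filter_upwards [self_mem_nhdsWithin] with ε (hε : 0 < ε)
      rw [mem_Iio, div_lt_one (by linarith)]
      linarith
  have hg : Tendsto (Function.uncurry g) (𝓝[>] 0 ×ˢ 𝓝 1) (𝓝 (2 ^ (-γ) * (x - 1)⁻¹)) := by
    have hcont : ContinuousAt (Function.uncurry g) (0, 1) :=
      (ContinuousAt.rpow_const (by fun_prop) (Or.inl (by norm_num))).mul
        (ContinuousAt.inv₀ (by fun_prop (disch := norm_num)) (by norm_num; linarith))
    have h01 : Function.uncurry g (0, 1) = 2 ^ (-γ) * (x - 1)⁻¹ := by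
      norm_num [g]
    rw [← h01]
    exact hcont.tendsto.mono_left (nhds_prod_eq (x := (0:ℝ)) (y := (1:ℝ)) ▸
      prod_mono nhdsWithin_le_nhds le_rfl)
  have hgcont : ∀ᶠ ε in 𝓝[>] (0:ℝ), ContinuousOn (g ε) (Icc (1 / (1 + ε)) 1) := by
    filter_upwards [Ioo_mem_nhdsGT (by linarith : (0:ℝ) < x - 1)] with ε ⟨hε0, hεx⟩
    have hxε : 1 < x / (1 + ε) := by rw [lt_div_iff₀ (by linarith)]; linarith
    have hpos : 0 < 1 / (1 + ε) := by positivity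
    exact (ContinuousOn.rpow_const (by fun_prop) fun s hs => Or.inl (by linarith [hs.1])).mul
      (ContinuousOn.inv₀ (by fun_prop) fun s hs => by linarith [hs.2])
  have hpow : Tendsto (fun ε : ℝ => (1 + ε) ^ (β - 1)) (𝓝[>] 0) (𝓝 1) := by
    have h : ContinuousAt (fun ε : ℝ => (1 + ε) ^ (β - 1)) 0 :=
      ContinuousAt.rpow_const (by fun_prop) (Or.inl (by norm_num))
    simpa using h.tendsto.mono_left nhdsWithin_le_nhds
  have hlim := hpow.mul
    (tendsto_one_sub_rpow_mul_integral_mul_one_sub_rpow_neg hβ ha hg hgcont)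
  rw [one_mul, ← div_eq_mul_inv, div_div, mul_comm (x - 1)] at hlim
  refine hlim.congr' ?_
  filter_upwards [self_mem_nhdsWithin] with ε (hε : 0 < ε)
  rw [← mul_assoc, one_sub_one_div_one_add_rpow hε]
  congr 2 with s
  ring

theorem stmt_14_general (α ρ : ℝ)
    (hαρh : α * (1 - ρ) < 1)
    (x : ℝ) (hx : 1 < x) :
    Tendsto (fun ε : ℝ =>
        ε ^ (α * (1 - ρ) - 1) * ∫ s in (1 / (1 + ε))..(1:ℝ),
          (1 + s) ^ (-(α * ρ)) * (1 - s) ^ (-(α * (1 - ρ))) * (x / (1 + ε) - s)⁻¹)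
      (𝓝[>] (0:ℝ)) (𝓝 (2 ^ (-(α * ρ)) / ((1 - α * (1 - ρ)) * (x - 1)))) :=
  tendsto_rpow_mul_integral_one_add_rpow_mul_one_sub_rpow_mul_inv (α * ρ) hαρh hx

/-- For `x > 1`, as `ε → 0⁺`,
`ε^{αρ̂−1}·∫_{1/(1+ε)}^1 (1+s)^{−αρ}(1−s)^{−αρ̂}(x/(1+ε)−s)^{−1} ds
  → 2^{−αρ}/((1−αρ̂)(x−1))`. -/
theorem stmt_14 (α ρ : ℝ) (hα0 : 0 < α) (hα2 : α < 2) (hρ0 : 0 < ρ) (hρ1 : ρ < 1)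
    (hαρ : α * ρ < 1) (hαρh : α * (1 - ρ) < 1)
    (x : ℝ) (hx : 1 < x) :
    Tendsto (fun ε : ℝ =>
        ε ^ (α * (1 - ρ) - 1) * ∫ s in (1 / (1 + ε))..(1:ℝ),
          (1 + s) ^ (-(α * ρ)) * (1 - s) ^ (-(α * (1 - ρ))) * (x / (1 + ε) - s)⁻¹)
      (𝓝[>] (0:ℝ)) (𝓝 (2 ^ (-(α * ρ)) / ((1 - α * (1 - ρ)) * (x - 1)))) :=
  stmt_14_general α ρ hαρh x hx
end

section
/- Suppose α ∈ (1,2). Then there exists a finite real number L such that the function x ↦ (x+1)·ψ_{αρ}(x) − (α−1)·∫₁^x ψ_{αρ}(u) du tends to L as x → ∞. -/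
/-!
Write `ψ(u) = (u - 1) ^ p * (u + 1) ^ q` with `p = αρ̂ - 1 > -1` and `q = αρ - 1`. Then
`(x + 1) ψ(x) = (x - 1) ^ p * (x + 1) ^ (q + 1)` has derivative
`(p + q + 1) ψ + 2p (x - 1) ^ (p - 1) * (x + 1) ^ q`, and `p + q + 1 = α - 1`. So the function in
question has derivative `2p (x - 1) ^ (p - 1) * (x + 1) ^ q = O(x ^ (α - 3))`, which is integrable
at infinity because `α < 2`; the function therefore converges.
-/

open Real MeasureTheory Set Filter intervalIntegral
open scoped Topology

section JacobiWeight

open Asymptotics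

noncomputable def jacobiWeight (p q u : ℝ) : ℝ := (u - 1) ^ p * (u + 1) ^ q

variable {p q : ℝ}

theorem continuousOn_jacobiWeight : ContinuousOn (jacobiWeight p q) (Ioi 1) := by
  intro u (hu : 1 < u)
  refine (ContinuousAt.mul ?_ ?_).continuousWithinAt
  · exact (continuousAt_id.sub continuousAt_const).rpow_const (Or.inl (sub_ne_zero.mpr hu.ne'))
  · exact (continuousAt_id.add continuousAt_const).rpow_const (Or.inl (by linarith : u + 1 ≠ 0))

theorem add_one_mul_jacobiWeight {u : ℝ} (hu : -1 < u) :
    (u + 1) * jacobiWeight p q u = jacobiWeight p (q + 1) u := by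
  rw [jacobiWeight, jacobiWeight, rpow_add_one (by linarith)]
  ring

theorem sub_one_mul_jacobiWeight {u : ℝ} (hu : 1 < u) :
    (u - 1) * jacobiWeight p q u = jacobiWeight (p + 1) q u := by
  rw [jacobiWeight, jacobiWeight, rpow_add_one (by linarith)]
  ring

theorem hasDerivAt_jacobiWeight {u : ℝ} (hu : 1 < u) :
    HasDerivAt (jacobiWeight p q)
      (p * jacobiWeight (p - 1) q u + q * jacobiWeight p (q - 1) u) u := by
  have h₁ := ((hasDerivAt_id u).sub_const 1).rpow_const (p := p) (Or.inl (sub_ne_zero.mpr hu.ne'))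
  have h₂ := ((hasDerivAt_id u).add_const 1).rpow_const (p := q)
    (Or.inl (by linarith : u + 1 ≠ 0))
  refine (h₁.mul h₂).congr_deriv ?_
  simp only [jacobiWeight, id]
  ring

theorem hasDerivAt_jacobiWeight_add_one {u : ℝ} (hu : 1 < u) :
    HasDerivAt (jacobiWeight p (q + 1))
      ((p + q + 1) * jacobiWeight p q u + 2 * p * jacobiWeight (p - 1) q u) u := by
  convert hasDerivAt_jacobiWeight (p := p) (q := q + 1) hu using 1
  have h : jacobiWeight p q u = (u - 1) * jacobiWeight (p - 1) q u := by
    rw [sub_one_mul_jacobiWeight hu, sub_add_cancel]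
  rw [← add_one_mul_jacobiWeight (by linarith : -1 < u), add_sub_cancel_right, h]
  ring

theorem intervalIntegrable_jacobiWeight (hp : -1 < p) {b : ℝ} (hb : 1 ≤ b) :
    IntervalIntegrable (jacobiWeight p q) volume 1 b := by
  have h₁ : IntervalIntegrable (fun u : ℝ => (u - 1) ^ p) volume 1 b := by
    simpa using (intervalIntegrable_rpow' (a := 0) (b := b - 1) hp).comp_sub_right 1
  refine h₁.mul_continuousOn ?_
  refine ContinuousOn.rpow_const (continuousOn_id.add continuousOn_const) fun u hu => ?_
  rw [uIcc_of_le hb] at hu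
  exact Or.inl (by linarith [hu.1] : u + 1 ≠ 0)

theorem jacobiWeight_isEquivalent_rpow :
    jacobiWeight p q ~[atTop] fun u => u ^ (p + q) := by
  have habs : (fun u : ℝ => u) ~[atTop] fun u => |u| :=
    (EventuallyEq.isEquivalent <| by
      filter_upwards [eventually_ge_atTop 0] with u hu using (abs_of_nonneg hu).symm)
  have hnorm : Tendsto (norm ∘ fun u : ℝ => |u|) atTop atTop := by
    simpa [Function.comp_def] using tendsto_abs_atTop_atTop
  have h₁ := (habs.add_const_of_norm_tendsto_atTop (c := -1) hnorm).rpow (fun _ => abs_nonneg _)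
    (r := p)
  have h₂ := (habs.add_const_of_norm_tendsto_atTop (c := 1) hnorm).rpow (fun _ => abs_nonneg _)
    (r := q)
  refine (h₁.mul h₂).congr_left ?_ |>.trans_eventuallyEq ?_
  · filter_upwards with u
    simp [jacobiWeight, sub_eq_add_neg]
  · filter_upwards [eventually_gt_atTop 0] with u hu
    simp [abs_of_pos hu, rpow_add hu]

theorem integrableOn_Ioi_jacobiWeight (hpq : p + q < -1) {c : ℝ} (hc : 1 < c) :
    IntegrableOn (jacobiWeight p q) (Ioi c) := by
  refine IntegrableOn.mono_set ?_ Ioi_subset_Ici_self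
  refine LocallyIntegrableOn.integrableOn_of_isBigO_atTop ?_ jacobiWeight_isEquivalent_rpow.isBigO
    (integrableAtFilter_rpow_atTop_iff.mpr hpq)
  exact (continuousOn_jacobiWeight.mono fun u (hu : c ≤ u) => hc.trans_le hu).locallyIntegrableOn
    measurableSet_Ici

theorem hasDerivAt_add_one_mul_jacobiWeight_sub_integral (hp : -1 < p) {x : ℝ} (hx : 1 < x) :
    HasDerivAt (fun x => (x + 1) * jacobiWeight p q x -
        (p + q + 1) * ∫ u in (1 : ℝ)..x, jacobiWeight p q u)
      (2 * p * jacobiWeight (p - 1) q x) x := by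
  have hF : (fun x => (x + 1) * jacobiWeight p q x) =ᶠ[𝓝 x] jacobiWeight p (q + 1) := by
    filter_upwards [Ioi_mem_nhds (by linarith : -1 < x)] with u hu
    exact add_one_mul_jacobiWeight hu
  have hI :
      HasDerivAt (fun x => ∫ u in (1 : ℝ)..x, jacobiWeight p q u) (jacobiWeight p q x) x :=
    integral_hasDerivAt_right (intervalIntegrable_jacobiWeight hp hx.le)
      (continuousOn_jacobiWeight.stronglyMeasurableAtFilter isOpen_Ioi x hx)
      (continuousOn_jacobiWeight.continuousAt (Ioi_mem_nhds hx))
  exact (((hasDerivAt_jacobiWeight_add_one hx).congr_of_eventuallyEq hF).sub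
    (hI.const_mul (p + q + 1))).congr_deriv (by ring)

theorem exists_tendsto_add_one_mul_jacobiWeight_sub_integral (hp : -1 < p) (hpq : p + q < 0) :
    ∃ L, Tendsto (fun x => (x + 1) * jacobiWeight p q x -
        (p + q + 1) * ∫ u in (1 : ℝ)..x, jacobiWeight p q u) atTop (𝓝 L) := by
  set E := fun x => (x + 1) * jacobiWeight p q x -
    (p + q + 1) * ∫ u in (1 : ℝ)..x, jacobiWeight p q u
  set E' := fun u => 2 * p * jacobiWeight (p - 1) q u
  have hE' : IntegrableOn E' (Ioi 2) :=
    (integrableOn_Ioi_jacobiWeight (by linarith) one_lt_two).const_mul _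
  refine ⟨E 2 + ∫ u in Ioi 2, E' u, ?_⟩
  refine (tendsto_const_nhds.add (intervalIntegral_tendsto_integral_Ioi 2 hE' tendsto_id)).congr' ?_
  filter_upwards [eventually_ge_atTop 2] with x hx
  have hsub : uIcc 2 x ⊆ Ioi 1 := fun u hu => by
    rw [uIcc_of_le hx] at hu
    exact one_lt_two.trans_le hu.1
  rw [id, integral_eq_sub_of_hasDerivAt (f' := E')
    (fun u hu => hasDerivAt_add_one_mul_jacobiWeight_sub_integral hp (hsub hu))
    ((continuousOn_const.mul continuousOn_jacobiWeight).mono hsub).intervalIntegrable]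
  exact add_sub_cancel _ _

end JacobiWeight

theorem stmt_19_general (α ρ : ℝ) (hα1 : 1 < α) (hα2 : α < 2) (hρ1 : ρ < 1) :
    ∃ L : ℝ, Tendsto (fun x : ℝ =>
        (x + 1) * psiRho α ρ x - (α - 1) * ∫ u in (1:ℝ)..x, psiRho α ρ u)
      atTop (𝓝 L) := by
  have hψ : psiRho α ρ = jacobiWeight (α * (1 - ρ) - 1) (α * ρ - 1) := rfl
  have hp : -1 < α * (1 - ρ) - 1 := by nlinarith
  rw [hψ, show α - 1 = α * (1 - ρ) - 1 + (α * ρ - 1) + 1 by ring]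
  exact exists_tendsto_add_one_mul_jacobiWeight_sub_integral hp (by linarith)

/-- For `α ∈ (1,2)`, the function `x ↦ (x+1)ψ_{αρ}(x) − (α−1)∫₁^x ψ_{αρ}(u) du` converges to a
finite limit as `x → ∞`. -/
theorem stmt_19 (α ρ : ℝ) (hα1 : 1 < α) (hα2 : α < 2) (hρ0 : 0 < ρ) (hρ1 : ρ < 1)
    (hαρ : α * ρ < 1) (hαρh : α * (1 - ρ) < 1) :
    ∃ L : ℝ, Tendsto (fun x : ℝ =>
        (x + 1) * psiRho α ρ x - (α - 1) * ∫ u in (1:ℝ)..x, psiRho α ρ u)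
      atTop (𝓝 L) :=
  stmt_19_general α ρ hα1 hα2 hρ1
end
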